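/- arXiv:0802.3786 — 3 statements merged into one kernel-verified Lean document; each statement's English description precedes it below -/
import Mathlib

section
/- Let ∇ and ∇' be two torsion-free connections on a smooth manifold M that are projectively equivalent via a 1-form α, i.e. ∇'_X Y − ∇_X Y = α(X) Y + α(Y) X for all vector fields X, Y. If both ∇ and ∇' are adapted to a regular foliation 𝓕 (meaning each maps Vect_𝓕(M) × Γ(T𝓕) into Γ(T𝓕) and Vect_𝓕(M) × Vect_𝓕(M) into Vect_𝓕(M)), then α is a foliated 1-form: in adapted coordinates (x,y), the leafwise components α_ξ vanish and the transverse components α_𝔦 depend only on y. -/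
/-!
Adaptedness kills the symbols `Γ^𝔨_{ξ𝔨}` of both connections, so the projective relation at
`k = l = 𝔨` transverse and `i = ξ` leafwise gives `α_ξ = 0`; at `k = i = l = 𝔦` it gives
`2 α_𝔦 = Γ'^𝔦_{𝔦𝔦} - Γ^𝔦_{𝔦𝔦}`, which depends only on `y`.
-/

section ProjectiveDifference

variable {ι : Type*} [DecidableEq ι] {Γ Γ' : ι → ι → ι → ℝ} {α : ι → ℝ}

theorem eq_sub_of_projective_of_ne
    (hproj : ∀ k i l, Γ' k i l - Γ k i l =
      α i * (if k = l then 1 else 0) + α l * (if k = i then 1 else 0))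
    {k i : ι} (hki : k ≠ i) : α i = Γ' k i k - Γ k i k := by
  simp [hproj, hki]

theorem two_mul_eq_sub_of_projective
    (hproj : ∀ k i l, Γ' k i l - Γ k i l =
      α i * (if k = l then 1 else 0) + α l * (if k = i then 1 else 0))
    (k : ι) : 2 * α k = Γ' k k k - Γ k k k := by
  simp [hproj, two_mul]

end ProjectiveDifference

/-- if two adapted torsion-free connections (given in adapted coordinates
`(x,y)` on `ℝᵖ × ℝ^q` by their Christoffel symbols) are projectively equivalent via a
1-form `α`, then `α` is foliated: the leafwise components `α_ξ` vanish and the transverse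
components `α_𝔦` depend only on `y`. -/
theorem stmt2 (p q : ℕ) (hq : 0 < q)
    (Γ Γ' : ((Fin p → ℝ) × (Fin q → ℝ)) →
      (Fin p ⊕ Fin q) → (Fin p ⊕ Fin q) → (Fin p ⊕ Fin q) → ℝ)
    (α : ((Fin p → ℝ) × (Fin q → ℝ)) → (Fin p ⊕ Fin q) → ℝ)
    -- projective equivalence: Γ'^k_{il} − Γ^k_{il} = α_i δ^k_l + α_l δ^k_i
    (hproj : ∀ m k i l, Γ' m k i l - Γ m k i l =
      α m i * (if k = l then 1 else 0) + α m l * (if k = i then 1 else 0))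
    -- adaptedness of Γ : Γ^𝔨_{iλ} = Γ^𝔨_{λi} = 0
    (hΓ1 : ∀ m (𝔨 : Fin q) (i : Fin p ⊕ Fin q) (ξ : Fin p),
      Γ m (Sum.inr 𝔨) i (Sum.inl ξ) = 0 ∧ Γ m (Sum.inr 𝔨) (Sum.inl ξ) i = 0)
    -- adaptedness of Γ : Γ^𝔨_{𝔦𝔩} depends only on y
    (hΓ2 : ∀ (x x' : Fin p → ℝ) (y : Fin q → ℝ) (𝔨 𝔦 𝔩 : Fin q),
      Γ (x, y) (Sum.inr 𝔨) (Sum.inr 𝔦) (Sum.inr 𝔩)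
        = Γ (x', y) (Sum.inr 𝔨) (Sum.inr 𝔦) (Sum.inr 𝔩))
    -- adaptedness of Γ'
    (hΓ1' : ∀ m (𝔨 : Fin q) (i : Fin p ⊕ Fin q) (ξ : Fin p),
      Γ' m (Sum.inr 𝔨) i (Sum.inl ξ) = 0 ∧ Γ' m (Sum.inr 𝔨) (Sum.inl ξ) i = 0)
    (hΓ2' : ∀ (x x' : Fin p → ℝ) (y : Fin q → ℝ) (𝔨 𝔦 𝔩 : Fin q),
      Γ' (x, y) (Sum.inr 𝔨) (Sum.inr 𝔦) (Sum.inr 𝔩)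
        = Γ' (x', y) (Sum.inr 𝔨) (Sum.inr 𝔦) (Sum.inr 𝔩)) :
    (∀ m (ξ : Fin p), α m (Sum.inl ξ) = 0) ∧
    (∀ (x x' : Fin p → ℝ) (y : Fin q → ℝ) (𝔦 : Fin q),
      α (x, y) (Sum.inr 𝔦) = α (x', y) (Sum.inr 𝔦)) := by
  refine ⟨fun m ξ => ?_, fun x x' y 𝔦 => ?_⟩
  · let 𝔨 : Fin q := ⟨0, hq⟩
    rw [eq_sub_of_projective_of_ne (hproj m) (k := Sum.inr 𝔨) Sum.inr_ne_inl,
      (hΓ1 m 𝔨 _ ξ).2, (hΓ1' m 𝔨 _ ξ).2, sub_zero]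
  · have h := two_mul_eq_sub_of_projective (hproj (x, y)) (Sum.inr 𝔦)
    have h' := two_mul_eq_sub_of_projective (hproj (x', y)) (Sum.inr 𝔦)
    rw [hΓ2 x x' y, hΓ2' x x' y, ← h'] at h
    exact mul_left_cancel₀ two_ne_zero h
end

section
/- Let ∇_𝓕 be an adapted torsion-free connection on a foliated manifold (M,𝓕). Then the formula ∇(𝓕)_{[X]}[Y] := [∇_{𝓕,X} Y], for adapted vector fields X, Y, gives a well-defined bilinear operation on the quotient Lie algebra Vect(M,𝓕) = Vect_𝓕(M)/Γ(T𝓕); i.e. [∇_{𝓕,X} Y] depends only on the classes [X] and [Y] modulo Γ(T𝓕), and ∇_{𝓕,X}Y ∈ Vect_𝓕(M). -/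
/-- `X` is adapted to the foliation whose tangent fields form `T`. -/
def Adapted {V : Type*} [LieRing V] (T : AddSubgroup V) (X : V) : Prop :=
  ∀ Z ∈ T, ⁅X, Z⁆ ∈ T

/-!
Write `D X Y - D X' Y' = D (X - X') Y + D X' (Y - Y')`. The second term lies in `T` because the
connection preserves `T` in its second slot. For the first, torsion-freeness moves `X - X' ∈ T`
into the second slot: `D (X - X') Y = D Y (X - X') + ⁅X - X', Y⁆`, and both summands lie in `T`
because `Y` is adapted.
-/

section

variable {V : Type*} [LieRing V] {T : AddSubgroup V}

theorem Adapted.lie_mem_of_mem_left {Y Z : V} (hY : Adapted T Y) (hZ : Z ∈ T) : ⁅Z, Y⁆ ∈ T := by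
  rw [← lie_skew]
  exact T.neg_mem (hY Z hZ)

theorem sub_apply_eq_apply_sub_add_apply_sub {D : V → V → V}
    (haddl : ∀ X X' Y : V, D (X + X') Y = D X Y + D X' Y)
    (haddr : ∀ X Y Y' : V, D X (Y + Y') = D X Y + D X Y') (X X' Y Y' : V) :
    D X Y - D X' Y' = D (X - X') Y + D X' (Y - Y') := by
  have hl := (AddMonoidHom.mk' (D · Y) (haddl · · Y)).map_sub X X'
  have hr := (AddMonoidHom.mk' (D X') (haddr X')).map_sub Y Y'
  simp only [AddMonoidHom.mk'_apply] at hl hr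
  rw [hl, hr]
  abel

theorem apply_mem_of_mem_left {D : V → V → V}
    (htf : ∀ X Y : V, D Y X = D X Y + ⁅Y, X⁆)
    (hAT : ∀ X Y : V, Adapted T X → Y ∈ T → D X Y ∈ T)
    {Y Z : V} (hY : Adapted T Y) (hZ : Z ∈ T) : D Z Y ∈ T := by
  rw [htf Y Z]
  exact T.add_mem (hAT Y Z hY hZ) (hY.lie_mem_of_mem_left hZ)

end

theorem stmt4_general {V : Type*} [LieRing V] (T : AddSubgroup V)
    (D : V → V → V)
    (haddl : ∀ X X' Y : V, D (X + X') Y = D X Y + D X' Y)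
    (haddr : ∀ X Y Y' : V, D X (Y + Y') = D X Y + D X Y')
    (htf : ∀ X Y : V, D Y X = D X Y + ⁅Y, X⁆)
    (hAT : ∀ X Y : V, Adapted T X → Y ∈ T → D X Y ∈ T)
    (hAA : ∀ X Y : V, Adapted T X → Adapted T Y → Adapted T (D X Y)) :
    (∀ X Y : V, Adapted T X → Adapted T Y → Adapted T (D X Y)) ∧
    (∀ X X' Y Y' : V, Adapted T X → Adapted T X' → Adapted T Y → Adapted T Y' →
      X - X' ∈ T → Y - Y' ∈ T → D X Y - D X' Y' ∈ T) := by
  refine ⟨hAA, fun X X' Y Y' _ hX' hY _ hXX' hYY' => ?_⟩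
  rw [sub_apply_eq_apply_sub_add_apply_sub haddl haddr]
  exact T.add_mem (apply_mem_of_mem_left htf hAT hY hXX') (hAT X' (Y - Y') hX' hYY')

/-- an adapted torsion-free connection `D = ∇_𝓕` induces a well-defined
operation on the quotient `Vect(M,𝓕) = Vect_𝓕(M)/Γ(T𝓕)`: the value `∇_{𝓕,X}Y` is
adapted, and its class modulo `T` only depends on the classes of `X` and `Y`. -/
theorem stmt4 {V : Type*} [LieRing V] (T : AddSubgroup V)
    (hinv : ∀ X ∈ T, ∀ Y ∈ T, ⁅X, Y⁆ ∈ T)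
    (D : V → V → V)
    (haddl : ∀ X X' Y : V, D (X + X') Y = D X Y + D X' Y)
    (haddr : ∀ X Y Y' : V, D X (Y + Y') = D X Y + D X Y')
    (htf : ∀ X Y : V, D Y X = D X Y + ⁅Y, X⁆)
    (hAT : ∀ X Y : V, Adapted T X → Y ∈ T → D X Y ∈ T)
    (hAA : ∀ X Y : V, Adapted T X → Adapted T Y → Adapted T (D X Y)) :
    (∀ X Y : V, Adapted T X → Adapted T Y → Adapted T (D X Y)) ∧
    (∀ X X' Y Y' : V, Adapted T X → Adapted T X' → Adapted T Y → Adapted T Y' →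
      X - X' ∈ T → Y - Y' ∈ T → D X Y - D X' Y' ∈ T) :=
  stmt4_general T D haddl haddr htf hAT hAA
end

section
/- Let ρ be the standard action of GL(q,ℝ) on S^k ℝ^q (k-th symmetric power) and let ρ_* be its Lie algebra representation. For h ∈ ℝ^{q*} and X ∈ ℝ^q, let L(h,X) := ρ_*(h⊗X + ⟨h,X⟩ Id) acting on S^k ℝ^q. Then for every S ∈ S^k ℝ^q and h ∈ ℝ^{q*} one has Σ_{j=1}^q i(ε^j) L(h, e_j) S = (q + 2k − 1) i(h) S, where i denotes interior product (contraction of a symmetric tensor with a covector) and (e_j), (ε^j) are dual bases of ℝ^q and ℝ^{q*}. -/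
/-- in the polynomial model of `S^k ℝ^q` (a symmetric contravariant
`k`-tensor `S` is encoded by the smooth function `P(ξ) = S(ξ,…,ξ)`, homogeneous of
degree `k` on `ℝ^{q*}`, under which the contraction `i(h)S` becomes the directional
derivative `ξ ↦ DP(ξ)[h]` and the infinitesimal action
`ρ_*(M)S` becomes `ξ ↦ DP(ξ)[ξ∘M]`, with `ξ∘(h⊗X + ⟨h,X⟩Id) = ξ(X)·h + ⟨h,X⟩·ξ`),
summing the contraction of `ρ_*(h⊗e_j + ⟨h,e_j⟩Id)S` with `ε^j` over a dual basis
gives `(q + 2k − 1)·i(h)S`. -/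
theorem stmt18 (q k : ℕ) (h : Fin q → ℝ)
    (P : (Fin q → ℝ) → ℝ) (hP : ContDiff ℝ ⊤ P)
    (hhom : ∀ (c : ℝ) (ξ : Fin q → ℝ), P (c • ξ) = c ^ k * P ξ) :
    ∀ ξ : Fin q → ℝ,
      (∑ j, fderiv ℝ (fun η => fderiv ℝ P η (η j • h + h j • η)) ξ (Pi.single j 1))
        = ((q : ℝ) + 2 * (k : ℝ) - 1) * fderiv ℝ P ξ h := by
  set g := fderiv ℝ P with hgdef
  have hPd : Differentiable ℝ P := hP.differentiable (by simp)
  have hg : ContDiff ℝ ⊤ g := hP.fderiv_right le_top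
  have hgd : Differentiable ℝ g := hg.differentiable (by simp)
  -- Euler identity
  have euler : ∀ ξ : Fin q → ℝ, g ξ ξ = (k : ℝ) * P ξ := by
    intro ξ
    have hs : HasDerivAt (fun c : ℝ => c • ξ) ξ 1 := by
      simpa using (hasDerivAt_id (1:ℝ)).smul_const ξ
    have h1 : HasDerivAt (fun c : ℝ => P (c • ξ)) (g ((1:ℝ) • ξ) ξ) 1 :=
      (hPd ((1:ℝ) • ξ)).hasFDerivAt.comp_hasDerivAt 1 hs
    have h2 : HasDerivAt (fun c : ℝ => c ^ k * P ξ) ((k : ℝ) * P ξ) 1 := by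
      simpa using (hasDerivAt_pow k (1:ℝ)).mul_const (P ξ)
    have heq : (fun c : ℝ => P (c • ξ)) = fun c : ℝ => c ^ k * P ξ := by
      funext c; exact hhom c ξ
    rw [heq] at h1
    have := h1.unique h2
    simpa using this
  intro ξ
  set B := fderiv ℝ g ξ with hBdef
  have hsymm : ∀ v w, B v w = B w v :=
    (hP.contDiffAt.isSymmSndFDerivAt le_top)
  -- second Euler identity
  have euler2 : ∀ v, B v ξ + g ξ v = (k : ℝ) * g ξ v := by
    have hF1 : HasFDerivAt (fun η => g η η)
        ((g ξ).comp (ContinuousLinearMap.id ℝ (Fin q → ℝ)) + B.flip ξ) ξ :=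
      (hgd ξ).hasFDerivAt.clm_apply (hasFDerivAt_id ξ)
    have hF2 : HasFDerivAt (fun η => (k : ℝ) * P η) ((k : ℝ) • g ξ) ξ :=
      (hPd ξ).hasFDerivAt.const_mul (k : ℝ)
    have heq : (fun η => g η η) = fun η => (k : ℝ) * P η := funext euler
    rw [heq] at hF1
    have hu := hF1.unique hF2
    intro v
    have := DFunLike.congr_fun hu v
    simp only [ContinuousLinearMap.add_apply, ContinuousLinearMap.coe_comp',
      Function.comp_apply, ContinuousLinearMap.coe_id', id_eq,
      ContinuousLinearMap.flip_apply, ContinuousLinearMap.smul_apply,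
      smul_eq_mul] at this
    linarith [this]
  -- derivative of each summand
  have key : ∀ j : Fin q,
      fderiv ℝ (fun η => g η (η j • h + h j • η)) ξ ((Pi.single j 1 : Fin q → ℝ))
        = B ((Pi.single j 1 : Fin q → ℝ)) (ξ j • h + h j • ξ) + g ξ (h + h j • (Pi.single j 1 : Fin q → ℝ)) := by
    intro j
    set L : (Fin q → ℝ) →L[ℝ] (Fin q → ℝ) :=
      (ContinuousLinearMap.proj j).smulRight h + h j • ContinuousLinearMap.id ℝ (Fin q → ℝ)
      with hLdef
    have hLapp : ∀ η : Fin q → ℝ, L η = η j • h + h j • η := by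
      intro η; simp [hLdef]
    have hu : HasFDerivAt (fun η : Fin q → ℝ => η j • h + h j • η) L ξ := by
      have := L.hasFDerivAt (x := ξ)
      convert this using 1
      exact funext fun η => (hLapp η).symm
    have hf : HasFDerivAt (fun η => g η (η j • h + h j • η))
        ((g ξ).comp L + B.flip (ξ j • h + h j • ξ)) ξ := by
      have := ((hgd ξ).hasFDerivAt.clm_apply hu)
      simpa [hLapp] using this
    rw [hf.fderiv]
    simp [hLapp, Pi.single_eq_same]
    try ring
  rw [Finset.sum_congr rfl fun j _ => key j]
  -- expand
  have expand : ∀ j : Fin q,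
      B ((Pi.single j 1 : Fin q → ℝ)) (ξ j • h + h j • ξ) + g ξ (h + h j • (Pi.single j 1 : Fin q → ℝ))
        = ξ j * B ((Pi.single j 1 : Fin q → ℝ)) h + h j * B ((Pi.single j 1 : Fin q → ℝ)) ξ
          + g ξ h + h j * g ξ ((Pi.single j 1 : Fin q → ℝ)) := by
    intro j
    simp [map_add, map_smul]
    ring
  rw [Finset.sum_congr rfl fun j _ => expand j]
  have hxi : ∑ j : Fin q, ξ j • ((Pi.single j 1 : Fin q → ℝ) : Fin q → ℝ) = ξ := by
    funext i
    simp [Finset.sum_apply, Pi.single_apply]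
  have sum1 : ∑ j : Fin q, ξ j * B ((Pi.single j 1 : Fin q → ℝ)) h = B ξ h := by
    calc ∑ j : Fin q, ξ j * B ((Pi.single j 1 : Fin q → ℝ)) h
        = ∑ j : Fin q, (B (ξ j • (Pi.single j 1 : Fin q → ℝ))) h := by
          simp [map_smul]
      _ = (∑ j : Fin q, B (ξ j • (Pi.single j 1 : Fin q → ℝ))) h := by
          rw [ContinuousLinearMap.sum_apply]
      _ = B ξ h := by rw [← map_sum, hxi]
  have hh : ∑ j : Fin q, h j • ((Pi.single j 1 : Fin q → ℝ) : Fin q → ℝ) = h := by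
    funext i
    simp [Finset.sum_apply, Pi.single_apply]
  have sum2 : ∑ j : Fin q, h j * B ((Pi.single j 1 : Fin q → ℝ)) ξ = B h ξ := by
    calc ∑ j : Fin q, h j * B ((Pi.single j 1 : Fin q → ℝ)) ξ
        = ∑ j : Fin q, (B (h j • (Pi.single j 1 : Fin q → ℝ))) ξ := by
          simp [map_smul]
      _ = (∑ j : Fin q, B (h j • (Pi.single j 1 : Fin q → ℝ))) ξ := by
          rw [ContinuousLinearMap.sum_apply]
      _ = B h ξ := by rw [← map_sum, hh]
  have sum3 : ∑ j : Fin q, h j * g ξ ((Pi.single j 1 : Fin q → ℝ)) = g ξ h := by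
    calc ∑ j : Fin q, h j * g ξ ((Pi.single j 1 : Fin q → ℝ))
        = ∑ j : Fin q, g ξ (h j • (Pi.single j 1 : Fin q → ℝ)) := by simp [map_smul]
      _ = g ξ h := by rw [← map_sum, hh]
  have hBh : B h ξ = ((k : ℝ) - 1) * g ξ h := by
    have := euler2 h; linarith
  have hBxi : B ξ h = ((k : ℝ) - 1) * g ξ h := by rw [hsymm ξ h, hBh]
  simp only [Finset.sum_add_distrib, sum1, sum2, sum3, Finset.sum_const,
    Finset.card_univ, Fintype.card_fin, nsmul_eq_mul, hBh, hBxi]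
  ring
end
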